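/- arXiv:1712.08096 — 4 statements merged into one kernel-verified Lean document; each statement's English description precedes it below -/
import Mathlib

section
/- Fix $c\in\mathbb{R}$. A full solution $u:\mathbb{R}\to\mathbb{R}^2$ of $\dot u=f^{-}_c(u)$ satisfies $u(t)\to(0,-c)$ as $t\to-\infty$ (equivalently, $u$ is bounded on $(-\infty,0]$) if and only if there is $h\in\mathbb{R}$ such that $u(t)=(he^t,\,h^2e^{2t}-c)$ for all $t\in\mathbb{R}$. Consequently, the global unstable set of the equilibrium $(0,-c)$, i.e. the set of values $u(0)$ over all full solutions converging to $(0,-c)$ at $-\infty$, equals the parabola $\{(h,h^2-c):h\in\mathbb{R}\}$. -/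
/-!
The first coordinate of a solution solves `x₁' = x₁`, and its defect `w = x₂ - x₁² + c`
from the parabola solves `w' = -w`, so `w(t) = w(0) e^{-t}`. This stays bounded as `t → -∞`
only if `w(0) = 0`; the solution then lies on the parabola and equals `(h eᵗ, h² e^{2t} - c)`
with `h = x₁(0)`.
-/

/-- `f⁻_c(x₁,x₂) = (x₁, -x₂ + 3x₁² - c)` -/
def fminus (c : ℝ) : ℝ × ℝ → ℝ × ℝ := fun x => (x.1, -x.2 + 3 * x.1 ^ 2 - c)

open Real Filter Set Bornology Topology

theorem eq_exp_mul_smul_of_hasDerivAt {E : Type*} [NormedAddCommGroup E] [NormedSpace ℝ E]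
    {f : ℝ → E} {k : ℝ} (hf : ∀ t, HasDerivAt f (k • f t) t) (t : ℝ) :
    f t = exp (k * t) • f 0 := by
  have hg : ∀ s, HasDerivAt (fun s => exp (-(k * s)) • f s) 0 s := by
    intro s
    have he : HasDerivAt (fun s => exp (-(k * s))) (exp (-(k * s)) * -k) s := by
      simpa using ((hasDerivAt_id s).const_mul k).neg.exp
    refine (he.smul (hf s)).congr_deriv ?_
    rw [smul_smul, ← add_smul, mul_neg, add_neg_cancel, zero_smul]
  have hconst : exp (-(k * t)) • f t = f 0 := by
    simpa using is_const_of_deriv_eq_zero (fun s => (hg s).differentiableAt)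
      (fun s => (hg s).deriv) t 0
  rw [← hconst, smul_smul, ← exp_add, add_neg_cancel, exp_zero, one_smul]

def parabolaDefect (c : ℝ) (x : ℝ × ℝ) : ℝ := x.2 - x.1 ^ 2 + c

theorem continuous_parabolaDefect (c : ℝ) : Continuous (parabolaDefect c) := by
  unfold parabolaDefect; fun_prop

noncomputable def parabolaSolution (c h t : ℝ) : ℝ × ℝ :=
  (h * exp t, h ^ 2 * exp (2 * t) - c)

theorem parabolaSolution_eq_comp_exp (c h : ℝ) :
    parabolaSolution c h = (fun s => (h * s, h ^ 2 * s ^ 2 - c)) ∘ exp := by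
  ext t <;> simp [parabolaSolution, ← exp_nat_mul, mul_comm]

theorem hasDerivAt_parabolaSolution (c h t : ℝ) :
    HasDerivAt (parabolaSolution c h) (fminus c (parabolaSolution c h t)) t := by
  rw [parabolaSolution_eq_comp_exp]
  have hparam :
      HasDerivAt (fun s => (h * s, h ^ 2 * s ^ 2 - c)) (h, h ^ 2 * (2 * exp t)) (exp t) := by
    simpa using ((hasDerivAt_id (exp t)).const_mul h).prodMk
      (((hasDerivAt_pow 2 (exp t)).const_mul (h ^ 2)).sub_const c)
  refine (hparam.scomp t (hasDerivAt_exp t)).congr_deriv ?_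
  simp only [fminus, Function.comp, Prod.smul_mk, smul_eq_mul]
  ext <;> ring

theorem tendsto_parabolaSolution_atBot (c h : ℝ) :
    Tendsto (parabolaSolution c h) atBot (𝓝 (0, -c)) := by
  rw [parabolaSolution_eq_comp_exp]
  have hcont : Continuous fun s : ℝ => (h * s, h ^ 2 * s ^ 2 - c) := by fun_prop
  convert (hcont.tendsto 0).comp tendsto_exp_atBot using 2
  simp

theorem isBounded_parabolaSolution_image_Iic (c h : ℝ) :
    IsBounded (parabolaSolution c h '' Iic 0) := by
  rw [parabolaSolution_eq_comp_exp, image_comp]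
  refine ((isCompact_Icc (a := 0) (b := 1)).image (by fun_prop)).isBounded.subset (image_mono ?_)
  rintro _ ⟨t, ht, rfl⟩
  exact ⟨(exp_pos t).le, exp_le_one_iff.mpr ht⟩

section Solution

variable {c : ℝ} {u : ℝ → ℝ × ℝ}

theorem hasDerivAt_fst_solution (hu : ∀ t, HasDerivAt u (fminus c (u t)) t) (t : ℝ) :
    HasDerivAt (fun s => (u s).1) (u t).1 t :=
  (hu t).fst

theorem hasDerivAt_snd_solution (hu : ∀ t, HasDerivAt u (fminus c (u t)) t) (t : ℝ) :
    HasDerivAt (fun s => (u s).2) (-(u t).2 + 3 * (u t).1 ^ 2 - c) t :=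
  (hu t).snd

theorem fst_solution_eq (hu : ∀ t, HasDerivAt u (fminus c (u t)) t) (t : ℝ) :
    (u t).1 = exp t * (u 0).1 := by
  simpa using (eq_exp_mul_smul_of_hasDerivAt (k := 1)
    (fun s => by simpa using hasDerivAt_fst_solution hu s) t).trans (smul_eq_mul _ _)

theorem hasDerivAt_parabolaDefect_solution (hu : ∀ t, HasDerivAt u (fminus c (u t)) t)
    (t : ℝ) : HasDerivAt (fun s => parabolaDefect c (u s)) (-parabolaDefect c (u t)) t := by
  refine (((hasDerivAt_snd_solution hu t).sub
    ((hasDerivAt_fst_solution hu t).pow 2)).add_const c).congr_deriv ?_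
  simp only [parabolaDefect]
  ring

theorem parabolaDefect_solution_eq (hu : ∀ t, HasDerivAt u (fminus c (u t)) t) (t : ℝ) :
    parabolaDefect c (u t) = exp (-t) * parabolaDefect c (u 0) := by
  simpa using (eq_exp_mul_smul_of_hasDerivAt (k := -1)
    (fun s => by simpa using hasDerivAt_parabolaDefect_solution hu s) t).trans
    (smul_eq_mul _ _)

theorem parabolaDefect_eq_zero_of_isBoundedUnder
    (hu : ∀ t, HasDerivAt u (fminus c (u t)) t)
    (hb : IsBoundedUnder (· ≤ ·) atBot fun t => ‖parabolaDefect c (u t)‖) :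
    parabolaDefect c (u 0) = 0 := by
  have hconst : ∀ t, exp t * parabolaDefect c (u t) = parabolaDefect c (u 0) := fun t => by
    rw [parabolaDefect_solution_eq hu, ← mul_assoc, ← exp_add, add_neg_cancel, exp_zero,
      one_mul]
  have hlim := tendsto_exp_atBot.zero_mul_isBoundedUnder_le hb
  simp only [hconst] at hlim
  exact tendsto_nhds_unique tendsto_const_nhds hlim

theorem isBoundedUnder_parabolaDefect_of_tendsto {l : Filter ℝ} {x : ℝ × ℝ}
    (h : Tendsto u l (𝓝 x)) :
    IsBoundedUnder (· ≤ ·) l fun t => ‖parabolaDefect c (u t)‖ :=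
  (((continuous_parabolaDefect c).tendsto x).comp h).norm.isBoundedUnder_le

theorem isBoundedUnder_parabolaDefect_of_isBounded (hb : IsBounded (u '' Iic 0)) :
    IsBoundedUnder (· ≤ ·) atBot fun t => ‖parabolaDefect c (u t)‖ := by
  obtain ⟨C, hC⟩ := isBounded_iff_forall_norm_le.mp
    (hb.isCompact_closure.image (continuous_parabolaDefect c)).isBounded
  refine isBoundedUnder_of_eventually_le (a := C) ?_
  filter_upwards [eventually_le_atBot 0] with t ht
  exact hC _ ⟨u t, subset_closure ⟨t, ht, rfl⟩, rfl⟩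

theorem exists_eq_parabolaSolution_of_isBoundedUnder
    (hu : ∀ t, HasDerivAt u (fminus c (u t)) t)
    (hb : IsBoundedUnder (· ≤ ·) atBot fun t => ‖parabolaDefect c (u t)‖) :
    ∃ h, ∀ t, u t = parabolaSolution c h t := by
  refine ⟨(u 0).1, fun t => ?_⟩
  have hdefect : parabolaDefect c (u t) = 0 := by
    rw [parabolaDefect_solution_eq hu, parabolaDefect_eq_zero_of_isBoundedUnder hu hb, mul_zero]
  have hfst := fst_solution_eq hu t
  rw [parabolaSolution_eq_comp_exp, Function.comp_apply]
  unfold parabolaDefect at hdefect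
  ext
  · linear_combination hfst
  · linear_combination hdefect + ((u t).1 + exp t * (u 0).1) * hfst

theorem tendsto_atBot_iff_exists_eq_parabolaSolution
    (hu : ∀ t, HasDerivAt u (fminus c (u t)) t) :
    Tendsto u atBot (𝓝 (0, -c)) ↔ ∃ h, ∀ t, u t = parabolaSolution c h t := by
  refine ⟨fun hlim => exists_eq_parabolaSolution_of_isBoundedUnder hu
    (isBoundedUnder_parabolaDefect_of_tendsto hlim), fun ⟨h, hh⟩ => ?_⟩
  rw [funext hh]
  exact tendsto_parabolaSolution_atBot c h

theorem isBounded_image_Iic_iff_exists_eq_parabolaSolution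
    (hu : ∀ t, HasDerivAt u (fminus c (u t)) t) :
    IsBounded (u '' Iic 0) ↔ ∃ h, ∀ t, u t = parabolaSolution c h t := by
  refine ⟨fun hb => exists_eq_parabolaSolution_of_isBoundedUnder hu
    (isBoundedUnder_parabolaDefect_of_isBounded hb), fun ⟨h, hh⟩ => ?_⟩
  rw [funext hh]
  exact isBounded_parabolaSolution_image_Iic c h

end Solution

/-- A full solution `u` of `u̇ = f⁻_c(u)` converges to `(0,-c)`
as `t → -∞` (equivalently, is bounded on `(-∞,0]`) iff
`u(t) = (h eᵗ, h² e^{2t} - c)` for some `h ∈ ℝ`; consequently the global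
unstable set of `(0,-c)` is the parabola `{(h, h² - c) : h ∈ ℝ}`. -/
theorem stmt5 (c : ℝ) :
    (∀ u : ℝ → ℝ × ℝ, (∀ t : ℝ, HasDerivAt u (fminus c (u t)) t) →
      ((Filter.Tendsto u Filter.atBot (nhds ((0:ℝ), -c)) ↔
          ∃ h : ℝ, ∀ t : ℝ,
            u t = (h * Real.exp t, h ^ 2 * Real.exp (2 * t) - c)) ∧
       (Bornology.IsBounded (u '' Set.Iic (0:ℝ)) ↔
          ∃ h : ℝ, ∀ t : ℝ,
            u t = (h * Real.exp t, h ^ 2 * Real.exp (2 * t) - c)))) ∧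
    ({x : ℝ × ℝ | ∃ u : ℝ → ℝ × ℝ,
        (∀ t : ℝ, HasDerivAt u (fminus c (u t)) t) ∧
        Filter.Tendsto u Filter.atBot (nhds ((0:ℝ), -c)) ∧ u 0 = x}
      = {p : ℝ × ℝ | ∃ h : ℝ, p = (h, h ^ 2 - c)}) := by
  refine ⟨fun u hu => ⟨tendsto_atBot_iff_exists_eq_parabolaSolution hu,
    isBounded_image_Iic_iff_exists_eq_parabolaSolution hu⟩, ?_⟩
  ext x
  constructor
  · rintro ⟨u, hu, hlim, rfl⟩
    obtain ⟨h, hh⟩ := (tendsto_atBot_iff_exists_eq_parabolaSolution hu).mp hlim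
    exact ⟨h, by simp [hh 0, parabolaSolution]⟩
  · rintro ⟨h, rfl⟩
    exact ⟨parabolaSolution c h, hasDerivAt_parabolaSolution c h,
      tendsto_parabolaSolution_atBot c h, by simp [parabolaSolution]⟩
end

section
/- Fix $c\in\mathbb{R}$ and $\varepsilon>0$. Every bounded full solution $u:\mathbb{R}\to\mathbb{R}^2$ of the nonautonomous equation $\dot x=f_c(t,x)$ satisfies $u(t)\to(0,-c)$ as $t\to-\infty$, $u(t)\to(0,0)$ as $t\to+\infty$, and its value at time zero lies in the intersection of the parabola $\{(h,h^2-c):h\in\mathbb{R}\}$ with the horizontal axis $\mathbb{R}\times\{0\}$, i.e. $u_2(0)=0$ and $u_1(0)^2=c$. -/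
/-- `f⁺_ε(x₁,x₂) = (-x₁ + εx₂, x₂)` -/
def fplus (ε : ℝ) : ℝ × ℝ → ℝ × ℝ := fun x => (-x.1 + ε * x.2, x.2)

/-- `f_c(t,x) = φ'(-t) f⁻_c(x) + φ'(t) f⁺_ε(x)`, where `dφ = φ'`. -/
def fc (c ε : ℝ) (dφ : ℝ → ℝ) (t : ℝ) (x : ℝ × ℝ) : ℝ × ℝ :=
  dφ (-t) • fminus c x + dφ t • fplus ε x

open Real Set Filter Topology

/-!
For `t ≥ 0` only `f⁺_ε` acts and for `t ≤ 0` only `f⁻_c` acts, each slowed down by the factor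
`φ'(±t)`. On each half the components obey scalar linear equations `y' = g' y`, solved by the
integrating factor `exp (-g)`: for `t ≥ 0`, `u₂(t) = u₂(0) e^{φ(t)}` and then
`u₁(t) = u₁(0) e^{-φ(t)}`; for `t ≤ 0`, `u₁(t) = u₁(0) e^{-φ(-t)}`, and the defect
`u₂ + c - u₁²` from the parabola grows like `e^{φ(-t)}`. Since `φ(t) = t` for `t ≥ 1`, boundedness
of `u` kills both growing modes, so `u₂(0) = 0` and `u₁(0)² = c`, and what is left decays.
-/

theorem Convex.eq_mul_exp_sub_of_hasDerivAt {s : Set ℝ} {g g' y : ℝ → ℝ} {a b : ℝ}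
    (hs : Convex ℝ s) (hg : ∀ t ∈ s, HasDerivAt g (g' t) t)
    (hy : ∀ t ∈ s, HasDerivAt y (g' t * y t) t) (ha : a ∈ s) (hb : b ∈ s) :
    y b = y a * exp (g b - g a) := by
  have hderiv : ∀ t ∈ s, HasDerivWithinAt (fun r => y r * exp (-g r)) 0 s t := fun t ht => by
    refine (((hy t ht).mul (hg t ht).neg.exp).congr_deriv ?_).hasDerivWithinAt
    simp only [Pi.neg_apply]
    ring
  have hconst : y b * exp (-g b) = y a * exp (-g a) := by
    simpa [sub_eq_zero] using
      hs.norm_image_sub_le_of_norm_hasDerivWithin_le hderiv (fun _ _ => norm_zero.le) ha hb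
  calc y b = y b * exp (-g b) * exp (g b) := by rw [mul_assoc, ← exp_add, neg_add_cancel,
        exp_zero, mul_one]
    _ = y a * exp (g b - g a) := by rw [hconst, mul_assoc, ← exp_add, neg_add_eq_sub]

theorem eq_zero_of_eventually_abs_mul_exp_le {a K : ℝ} (h : ∀ᶠ t in atTop, |a * exp t| ≤ K) :
    a = 0 := by
  by_contra ha
  have hgrow : Tendsto (fun t => |a * exp t|) atTop atTop := by
    simpa only [abs_mul, abs_exp] using tendsto_exp_atTop.const_mul_atTop (abs_pos.2 ha)
  obtain ⟨t, hlt, hle⟩ := ((hgrow.eventually_gt_atTop K).and h).exists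
  exact hlt.not_ge hle

theorem HasDerivAt.eq_zero_of_forall_le_eq {f : ℝ → ℝ} {f' a C t : ℝ} (hf : HasDerivAt f f' t)
    (hC : ∀ s ≤ a, f s = C) (ht : t ≤ a) : f' = 0 :=
  (uniqueDiffWithinAt_Iic t).eq_deriv _ hf.hasDerivWithinAt
    ((hasDerivWithinAt_const t _ C).congr (fun s hs => hC s (mem_Iic.1 hs |>.trans ht)) (hC t ht))

namespace fc

variable {c ε : ℝ} {φ dφ : ℝ → ℝ} {u : ℝ → ℝ × ℝ}

theorem hasDerivAt_fst {t : ℝ} (hu : HasDerivAt u (fc c ε dφ t (u t)) t) :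
    HasDerivAt (fun s => (u s).1) (dφ (-t) * (u t).1 + dφ t * (-(u t).1 + ε * (u t).2)) t := by
  simpa [fc, fminus, fplus] using hu.hasFDerivAt.fst.hasDerivAt

theorem hasDerivAt_snd {t : ℝ} (hu : HasDerivAt u (fc c ε dφ t (u t)) t) :
    HasDerivAt (fun s => (u s).2)
      (dφ (-t) * (-(u t).2 + 3 * (u t).1 ^ 2 - c) + dφ t * (u t).2) t := by
  simpa [fc, fminus, fplus] using hu.hasFDerivAt.snd.hasDerivAt

theorem snd_eq_mul_exp_of_nonneg (hφ : ∀ t, HasDerivAt φ (dφ t) t) (hφ0 : ∀ t ≤ 0, φ t = 0)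
    (hu : ∀ t, HasDerivAt u (fc c ε dφ t (u t)) t) {t : ℝ} (ht : 0 ≤ t) :
    (u t).2 = (u 0).2 * exp (φ t) := by
  have h := (convex_Ici 0).eq_mul_exp_sub_of_hasDerivAt (y := fun s => (u s).2)
    (fun s _ => hφ s) (fun s hs => ?_) self_mem_Ici ht
  · simpa [hφ0 0 le_rfl] using h
  · convert hasDerivAt_snd (hu s) using 1
    rw [(hφ (-s)).eq_zero_of_forall_le_eq hφ0 (neg_nonpos.2 hs)]
    ring

theorem fst_eq_mul_exp_of_nonneg (hφ : ∀ t, HasDerivAt φ (dφ t) t) (hφ0 : ∀ t ≤ 0, φ t = 0)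
    (hu : ∀ t, HasDerivAt u (fc c ε dφ t (u t)) t) (h20 : (u 0).2 = 0) {t : ℝ} (ht : 0 ≤ t) :
    (u t).1 = (u 0).1 * exp (-φ t) := by
  have h := (convex_Ici 0).eq_mul_exp_sub_of_hasDerivAt (y := fun s => (u s).1)
    (fun s _ => (hφ s).neg) (fun s hs => ?_) self_mem_Ici ht
  · simpa [hφ0 0 le_rfl] using h
  · convert hasDerivAt_fst (hu s) using 1
    rw [(hφ (-s)).eq_zero_of_forall_le_eq hφ0 (neg_nonpos.2 hs),
      snd_eq_mul_exp_of_nonneg hφ hφ0 hu hs, h20]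
    ring

theorem fst_eq_mul_exp_of_nonpos (hφ : ∀ t, HasDerivAt φ (dφ t) t) (hφ0 : ∀ t ≤ 0, φ t = 0)
    (hu : ∀ t, HasDerivAt u (fc c ε dφ t (u t)) t) {t : ℝ} (ht : t ≤ 0) :
    (u t).1 = (u 0).1 * exp (-φ (-t)) := by
  have h := (convex_Iic 0).eq_mul_exp_sub_of_hasDerivAt (y := fun s => (u s).1)
    (g := fun s => -φ (-s)) (g' := fun s => dφ (-s)) (fun s _ => ?_) (fun s hs => ?_)
    self_mem_Iic ht
  · simpa [hφ0 0 le_rfl] using h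
  · exact ((hφ (-s)).comp s (hasDerivAt_neg s)).neg.congr_deriv (by ring)
  · convert hasDerivAt_fst (hu s) using 1
    rw [(hφ s).eq_zero_of_forall_le_eq hφ0 hs]
    ring

theorem snd_add_sub_sq_eq_mul_exp_of_nonpos (hφ : ∀ t, HasDerivAt φ (dφ t) t)
    (hφ0 : ∀ t ≤ 0, φ t = 0) (hu : ∀ t, HasDerivAt u (fc c ε dφ t (u t)) t) {t : ℝ}
    (ht : t ≤ 0) :
    (u t).2 + c - (u t).1 ^ 2 = ((u 0).2 + c - (u 0).1 ^ 2) * exp (φ (-t)) := by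
  have h := (convex_Iic 0).eq_mul_exp_sub_of_hasDerivAt
    (y := fun s => (u s).2 + c - (u s).1 ^ 2) (g := fun s => φ (-s))
    (g' := fun s => -dφ (-s)) (fun s _ => ?_) (fun s hs => ?_) self_mem_Iic ht
  · simpa [hφ0 0 le_rfl] using h
  · exact ((hφ (-s)).comp s (hasDerivAt_neg s)).congr_deriv (by ring)
  · refine (((hasDerivAt_snd (hu s)).add_const c).sub
      ((hasDerivAt_fst (hu s)).pow 2)).congr_deriv ?_
    rw [(hφ s).eq_zero_of_forall_le_eq hφ0 hs]
    ring

theorem snd_zero_eq_zero (hφ : ∀ t, HasDerivAt φ (dφ t) t) (hφ0 : ∀ t ≤ 0, φ t = 0)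
    (hφ1 : ∀ t ≥ 1, φ t = t) (hu : ∀ t, HasDerivAt u (fc c ε dφ t (u t)) t)
    (hb : Bornology.IsBounded (range u)) : (u 0).2 = 0 := by
  obtain ⟨M, hM⟩ := hb.exists_norm_le
  refine eq_zero_of_eventually_abs_mul_exp_le (K := M) ?_
  filter_upwards [eventually_ge_atTop 1] with t ht
  rw [← hφ1 t ht, ← snd_eq_mul_exp_of_nonneg hφ hφ0 hu (by linarith)]
  exact (norm_snd_le _).trans (hM _ (mem_range_self t))

theorem snd_zero_add_sub_fst_zero_sq_eq_zero (hφ : ∀ t, HasDerivAt φ (dφ t) t)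
    (hφ0 : ∀ t ≤ 0, φ t = 0) (hφ1 : ∀ t ≥ 1, φ t = t) (hu : ∀ t, HasDerivAt u (fc c ε dφ t (u t)) t)
    (hb : Bornology.IsBounded (range u)) : (u 0).2 + c - (u 0).1 ^ 2 = 0 := by
  obtain ⟨M, hM⟩ := hb.exists_norm_le
  refine eq_zero_of_eventually_abs_mul_exp_le (K := M + |c| + M ^ 2) ?_
  filter_upwards [eventually_ge_atTop 1] with t ht
  have hw := snd_add_sub_sq_eq_mul_exp_of_nonpos hφ hφ0 hu (t := -t) (by linarith)
  rw [neg_neg, hφ1 t ht] at hw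
  have h1 : |(u (-t)).1| ≤ M := (norm_fst_le _).trans (hM _ (mem_range_self _))
  have h2 : |(u (-t)).2| ≤ M := (norm_snd_le _).trans (hM _ (mem_range_self _))
  have h1' : (u (-t)).1 ^ 2 ≤ M ^ 2 := by
    rw [← sq_abs]
    gcongr
  rw [← hw, abs_le]
  constructor <;> linarith [abs_le.1 h2, le_abs_self c, neg_abs_le c, sq_nonneg (u (-t)).1]

theorem tendsto_atTop (hφ : ∀ t, HasDerivAt φ (dφ t) t) (hφ0 : ∀ t ≤ 0, φ t = 0)
    (hφ1 : ∀ t ≥ 1, φ t = t) (hu : ∀ t, HasDerivAt u (fc c ε dφ t (u t)) t)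
    (hb : Bornology.IsBounded (range u)) : Tendsto u atTop (𝓝 (0, 0)) := by
  have h20 := snd_zero_eq_zero hφ hφ0 hφ1 hu hb
  have hlim : Tendsto (fun t => ((u 0).1 * exp (-t), (0 : ℝ))) atTop (𝓝 (0, 0)) := by
    refine Tendsto.prodMk_nhds ?_ tendsto_const_nhds
    simpa using tendsto_exp_neg_atTop_nhds_zero.const_mul (u 0).1
  refine hlim.congr' ?_
  filter_upwards [eventually_ge_atTop 1] with t ht
  ext
  · rw [fst_eq_mul_exp_of_nonneg hφ hφ0 hu h20 (t := t) (by linarith), hφ1 t ht]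
  · rw [snd_eq_mul_exp_of_nonneg hφ hφ0 hu (t := t) (by linarith), h20, zero_mul]

theorem tendsto_atBot (hφ : ∀ t, HasDerivAt φ (dφ t) t) (hφ0 : ∀ t ≤ 0, φ t = 0)
    (hφ1 : ∀ t ≥ 1, φ t = t) (hu : ∀ t, HasDerivAt u (fc c ε dφ t (u t)) t)
    (hb : Bornology.IsBounded (range u)) : Tendsto u atBot (𝓝 (0, -c)) := by
  have hw := snd_zero_add_sub_fst_zero_sq_eq_zero hφ hφ0 hφ1 hu hb
  have h1 : Tendsto (fun t => (u 0).1 * exp t) atBot (𝓝 0) := by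
    simpa using tendsto_exp_atBot.const_mul (u 0).1
  have hlim : Tendsto (fun t => ((u 0).1 * exp t, ((u 0).1 * exp t) ^ 2 - c)) atBot
      (𝓝 (0, -c)) :=
    h1.prodMk_nhds (by simpa using (h1.pow 2).sub_const c)
  refine hlim.congr' ?_
  filter_upwards [eventually_le_atBot (-1)] with t ht
  have hfst : (u t).1 = (u 0).1 * exp t := by
    rw [fst_eq_mul_exp_of_nonpos hφ hφ0 hu (t := t) (by linarith), hφ1 (-t) (by linarith), neg_neg]
  have hsnd := snd_add_sub_sq_eq_mul_exp_of_nonpos hφ hφ0 hu (t := t) (by linarith)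
  rw [hw, zero_mul, hfst] at hsnd
  ext
  · exact hfst.symm
  · linarith

end fc

theorem stmt9_general (c ε : ℝ) (φ dφ : ℝ → ℝ)
    (hφ : ∀ t : ℝ, HasDerivAt φ (dφ t) t)
    (hφ0 : ∀ t ≤ (0:ℝ), φ t = 0) (hφ1 : ∀ t ≥ (1:ℝ), φ t = t)
    (u : ℝ → ℝ × ℝ)
    (hu : ∀ t : ℝ, HasDerivAt u (fc c ε dφ t (u t)) t)
    (hb : Bornology.IsBounded (Set.range u)) :
    Filter.Tendsto u Filter.atBot (nhds ((0:ℝ), -c)) ∧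
    Filter.Tendsto u Filter.atTop (nhds ((0:ℝ), (0:ℝ))) ∧
    (u 0).2 = 0 ∧ (u 0).1 ^ 2 = c := by
  have h20 := fc.snd_zero_eq_zero hφ hφ0 hφ1 hu hb
  have hw := fc.snd_zero_add_sub_fst_zero_sq_eq_zero hφ hφ0 hφ1 hu hb
  exact ⟨fc.tendsto_atBot hφ hφ0 hφ1 hu hb, fc.tendsto_atTop hφ hφ0 hφ1 hu hb, h20, by linarith⟩

/-- Every bounded full solution `u` of `ẋ = f_c(t,x)` satisfies
`u(t) → (0,-c)` as `t → -∞`, `u(t) → (0,0)` as `t → +∞`, and `u(0)` lies on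
the intersection of the parabola `{(h,h²-c)}` with the horizontal axis:
`u₂(0) = 0` and `u₁(0)² = c`. -/
theorem stmt9 (c ε : ℝ) (hε : 0 < ε) (φ dφ : ℝ → ℝ)
    (hφ : ∀ t : ℝ, HasDerivAt φ (dφ t) t) (hdc : Continuous dφ)
    (hφ0 : ∀ t ≤ (0:ℝ), φ t = 0) (hφ1 : ∀ t ≥ (1:ℝ), φ t = t)
    (hdpos : ∀ t : ℝ, 0 ≤ dφ t)
    (u : ℝ → ℝ × ℝ)
    (hu : ∀ t : ℝ, HasDerivAt u (fc c ε dφ t (u t)) t)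
    (hb : Bornology.IsBounded (Set.range u)) :
    Filter.Tendsto u Filter.atBot (nhds ((0:ℝ), -c)) ∧
    Filter.Tendsto u Filter.atTop (nhds ((0:ℝ), (0:ℝ))) ∧
    (u 0).2 = 0 ∧ (u 0).1 ^ 2 = c :=
  stmt9_general c ε φ dφ hφ hφ0 hφ1 u hu hb
end

section
/- Fix $c>0$ and $\varepsilon>0$, and let $u:\mathbb{R}\to\mathbb{R}^2$ be a bounded full solution of $\dot x=f_c(t,x)$. Then $u$ is weakly hyperbolic: the linearized equation $\dot w=\phi'(-t)\,Df^{-}_c(u(t))\,w+\phi'(t)\,Df^{+}_\varepsilon(u(t))\,w$ has no bounded full solution $w:\mathbb{R}\to\mathbb{R}^2$ other than $w\equiv 0$. -/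
/-- Jacobian of `f⁻_c` at `x`, applied to `w`:
`Df⁻_c(x) w = (w₁, 6x₁w₁ - w₂)`. -/
def Dfminus (x w : ℝ × ℝ) : ℝ × ℝ := (w.1, 6 * x.1 * w.1 - w.2)

/-- Jacobian of `f⁺_ε`, applied to `w`: `Df⁺_ε w = (-w₁ + εw₂, w₂)`. -/
def Dfplus (ε : ℝ) (w : ℝ × ℝ) : ℝ × ℝ := (-w.1 + ε * w.2, w.2)

/-!
Since `φ' = 0` on `(-∞, 0]`, the equation is `ẋ = φ'(t) f⁺_ε(x)` for `t ≥ 0` and, in reversed time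
`s = -t ≥ 0`, `ẋ = -φ'(s) f⁻_c(x)`. A scalar quantity with `ẏ = ±φ' y` equals `y(0) e^{±φ}`, and
`φ(t) = t` for `t ≥ 1`, so if it is bounded and has the sign `+` it vanishes. Forward in time this
applies to the second components of `u` and `w`. Backward in time it applies to the offset
`u₂ - u₁² + c` of `u` from the unstable manifold `x₂ = x₁² - c` of the equilibrium `(0, -c)` of
`f⁻_c`, and to its linearization `w₂ - 2 u₁ w₁` along `w`. Hence `u(0) = (±√c, 0)` and
`w₂(0) = 2 u₁(0) w₁(0) = 0`, so `w(0) = 0`; the remaining components obey `ẏ = -φ' y` and vanish.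
-/

open Set Filter Real Bornology

theorem HasDerivAt.fst {𝕜 E F : Type*} [NontriviallyNormedField 𝕜] [NormedAddCommGroup E]
    [NormedSpace 𝕜 E] [NormedAddCommGroup F] [NormedSpace 𝕜 F] {f : 𝕜 → E × F} {f' : E × F}
    {x : 𝕜} (h : HasDerivAt f f' x) : HasDerivAt (fun y => (f y).1) f'.1 x := by
  simpa using h.hasFDerivAt.fst.hasDerivAt

theorem HasDerivAt.snd {𝕜 E F : Type*} [NontriviallyNormedField 𝕜] [NormedAddCommGroup E]
    [NormedSpace 𝕜 E] [NormedAddCommGroup F] [NormedSpace 𝕜 F] {f : 𝕜 → E × F} {f' : E × F}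
    {x : 𝕜} (h : HasDerivAt f f' x) : HasDerivAt (fun y => (f y).2) f'.2 x := by
  simpa using h.hasFDerivAt.snd.hasDerivAt

theorem Bornology.IsBounded.range_comp_of_continuous {ι X Y : Type*} [PseudoMetricSpace X]
    [ProperSpace X] [PseudoMetricSpace Y] {f : ι → X} (hf : IsBounded (range f)) {g : X → Y}
    (hg : Continuous g) : IsBounded (range (g ∘ f)) := by
  rw [range_comp]
  exact (hf.isCompact_closure.image hg).isBounded.subset (image_mono subset_closure)

theorem eq_zero_of_hasDerivAt_of_eqOn_Iic {φ dφ : ℝ → ℝ} (hφ : ∀ t ≤ 0, HasDerivAt φ (dφ t) t)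
    (hφ0 : ∀ t ≤ 0, φ t = 0) : ∀ t ≤ 0, dφ t = 0 := fun t ht =>
  (uniqueDiffOn_Iic 0 t ht).eq_deriv _ (hφ t ht).hasDerivWithinAt
    ((hasDerivWithinAt_const t _ 0).congr hφ0 (hφ0 t ht))

section LinearScalarODE

variable {A a y : ℝ → ℝ}

theorem eq_mul_exp_of_hasDerivAt_mul (hA : ∀ t ≥ 0, HasDerivAt A (a t) t)
    (hy : ∀ t ≥ 0, HasDerivAt y (a t * y t) t) : ∀ t ≥ 0, y t = y 0 * exp (A t - A 0) := by
  have hderiv : ∀ t ≥ 0, HasDerivAt (fun s => y s * exp (-A s)) 0 t := fun t ht =>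
    ((hy t ht).mul (hA t ht).neg.exp).congr_deriv (by ring)
  intro t ht
  have hconst : y t * exp (-A t) = y 0 * exp (-A 0) :=
    constant_of_has_deriv_right_zero (fun s hs => (hderiv s hs.1).continuousAt.continuousWithinAt)
      (fun s hs => (hderiv s hs.1).hasDerivWithinAt) t ⟨ht, le_rfl⟩
  calc y t = y t * exp (-A t) * exp (A t) := by
        rw [mul_assoc, ← exp_add, neg_add_cancel, exp_zero, mul_one]
    _ = y 0 * exp (A t - A 0) := by rw [hconst, mul_assoc, ← exp_add, neg_add_eq_sub]

theorem eq_zero_of_hasDerivAt_mul (hA : ∀ t ≥ 0, HasDerivAt A (a t) t)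
    (hy : ∀ t ≥ 0, HasDerivAt y (a t * y t) t) (h0 : y 0 = 0) : ∀ t ≥ 0, y t = 0 := fun t ht => by
  rw [eq_mul_exp_of_hasDerivAt_mul hA hy t ht, h0, zero_mul]

theorem eq_zero_of_isBounded_of_hasDerivAt_mul (hA : ∀ t ≥ 0, HasDerivAt A (a t) t)
    (hA1 : ∀ t ≥ 1, A t = t) (hy : ∀ t ≥ 0, HasDerivAt y (a t * y t) t)
    (hyb : IsBounded (range y)) : y 0 = 0 := by
  by_contra hne
  obtain ⟨M, hM⟩ := isBounded_iff_forall_norm_le.mp hyb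
  have hgrow : Tendsto (fun t => |y 0| * exp (t - A 0)) atTop atTop :=
    (tendsto_exp_atTop.comp (tendsto_atTop_add_const_right _ _ tendsto_id)).const_mul_atTop
      (abs_pos.2 hne)
  obtain ⟨t, hMt, ht⟩ := ((hgrow.eventually_gt_atTop M).and (eventually_ge_atTop 1)).exists
  have hyt : |y t| = |y 0| * exp (t - A 0) := by
    rw [eq_mul_exp_of_hasDerivAt_mul hA hy t (by linarith), hA1 t ht, abs_mul,
      abs_of_pos (exp_pos _)]
  exact (hM _ (mem_range_self t)).not_gt (by rwa [Real.norm_eq_abs, hyt])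

end LinearScalarODE

def unstableOffset (c : ℝ) (x : ℝ × ℝ) : ℝ := x.2 - x.1 ^ 2 + c

def unstableOffsetDeriv (x w : ℝ × ℝ) : ℝ := w.2 - 2 * x.1 * w.1

section UnstableOffset

variable {U W : ℝ → ℝ × ℝ} {a c s : ℝ}

theorem hasDerivAt_unstableOffset (hU : HasDerivAt U (-a • fminus c (U s)) s) :
    HasDerivAt (fun r => unstableOffset c (U r)) (a * unstableOffset c (U s)) s :=
  ((hU.snd.sub (hU.fst.pow 2)).add_const c).congr_deriv <| by
    simp only [unstableOffset, fminus, Prod.smul_fst, Prod.smul_snd, smul_eq_mul]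
    ring

theorem hasDerivAt_unstableOffsetDeriv (hU : HasDerivAt U (-a • fminus c (U s)) s)
    (hW : HasDerivAt W (-a • Dfminus (U s) (W s)) s) :
    HasDerivAt (fun r => unstableOffsetDeriv (U r) (W r)) (a * unstableOffsetDeriv (U s) (W s)) s :=
  (hW.snd.sub ((hU.fst.const_mul 2).mul hW.fst)).congr_deriv <| by
    simp only [unstableOffsetDeriv, fminus, Dfminus, Prod.smul_fst, Prod.smul_snd, smul_eq_mul]
    ring

end UnstableOffset

section OneSided

variable {φ dφ : ℝ → ℝ}

theorem snd_eq_zero_of_hasDerivAt_fplus (hφ : ∀ t ≥ 0, HasDerivAt φ (dφ t) t)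
    (hφ1 : ∀ t ≥ 1, φ t = t) {ε : ℝ} {v : ℝ → ℝ × ℝ}
    (hv : ∀ t ≥ 0, HasDerivAt v (dφ t • fplus ε (v t)) t) (hvb : IsBounded (range v)) :
    ∀ t ≥ 0, (v t).2 = 0 := by
  have hv2 : ∀ t ≥ 0, HasDerivAt (fun s => (v s).2) (dφ t * (v t).2) t := fun t ht => by
    simpa [fplus] using (hv t ht).snd
  exact eq_zero_of_hasDerivAt_mul hφ hv2
    (eq_zero_of_isBounded_of_hasDerivAt_mul hφ hφ1 hv2
      (hvb.range_comp_of_continuous continuous_snd))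

theorem eq_zero_of_hasDerivAt_fplus (hφ : ∀ t ≥ 0, HasDerivAt φ (dφ t) t)
    (hφ1 : ∀ t ≥ 1, φ t = t) {ε : ℝ} {v : ℝ → ℝ × ℝ}
    (hv : ∀ t ≥ 0, HasDerivAt v (dφ t • fplus ε (v t)) t) (hvb : IsBounded (range v))
    (hv0 : (v 0).1 = 0) : ∀ t ≥ 0, v t = 0 := by
  have hv2 := snd_eq_zero_of_hasDerivAt_fplus hφ hφ1 hv hvb
  have hv1 : ∀ t ≥ 0, (v t).1 = 0 := eq_zero_of_hasDerivAt_mul (fun t ht => (hφ t ht).neg)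
    (fun t ht => by simpa [fplus, hv2 t ht] using (hv t ht).fst) hv0
  exact fun t ht => Prod.ext (hv1 t ht) (hv2 t ht)

theorem eq_zero_of_hasDerivAt_neg_fminus (hφ : ∀ t ≥ 0, HasDerivAt φ (dφ t) t)
    (hφ1 : ∀ t ≥ 1, φ t = t) {c : ℝ} (hc : 0 < c) {U W : ℝ → ℝ × ℝ}
    (hU : ∀ s ≥ 0, HasDerivAt U (-dφ s • fminus c (U s)) s)
    (hW : ∀ s ≥ 0, HasDerivAt W (-dφ s • Dfminus (U s) (W s)) s)
    (hUb : IsBounded (range U)) (hWb : IsBounded (range W)) (hU0 : (U 0).2 = 0)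
    (hW0 : (W 0).2 = 0) : ∀ s ≥ 0, W s = 0 := by
  have hoff : unstableOffset c (U 0) = 0 :=
    eq_zero_of_isBounded_of_hasDerivAt_mul hφ hφ1
      (fun s hs => hasDerivAt_unstableOffset (hU s hs))
      (hUb.range_comp_of_continuous (g := unstableOffset c) (by unfold unstableOffset; fun_prop))
  have hU1 : (U 0).1 ≠ 0 := by
    intro h
    simp only [unstableOffset, hU0, h] at hoff
    linarith
  have hUWb : IsBounded (range fun s => (U s, W s)) :=
    (hUb.prod hWb).subset (by rintro _ ⟨s, rfl⟩; exact ⟨mem_range_self s, mem_range_self s⟩)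
  have hoffD : ∀ s ≥ 0, unstableOffsetDeriv (U s) (W s) = 0 := by
    have hderiv := fun s hs => hasDerivAt_unstableOffsetDeriv (hU s hs) (hW s hs)
    refine eq_zero_of_hasDerivAt_mul hφ hderiv (eq_zero_of_isBounded_of_hasDerivAt_mul hφ hφ1 hderiv
      (hUWb.range_comp_of_continuous (g := fun p => unstableOffsetDeriv p.1 p.2)
        (by unfold unstableOffsetDeriv; fun_prop)))
  have hW10 : (W 0).1 = 0 := by
    have h := hoffD 0 le_rfl
    simp only [unstableOffsetDeriv, hW0] at h
    simpa [hU1] using h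
  have hW1 : ∀ s ≥ 0, (W s).1 = 0 := eq_zero_of_hasDerivAt_mul (fun s hs => (hφ s hs).neg)
    (fun s hs => by simpa [Dfminus] using (hW s hs).fst) hW10
  intro s hs
  have h := hoffD s hs
  simp only [unstableOffsetDeriv, hW1 s hs, mul_zero, sub_zero] at h
  exact Prod.ext (hW1 s hs) h

end OneSided

theorem stmt11_general (c ε : ℝ) (hc : 0 < c) (φ dφ : ℝ → ℝ)
    (hφ : ∀ t : ℝ, HasDerivAt φ (dφ t) t)
    (hφ0 : ∀ t ≤ (0:ℝ), φ t = 0) (hφ1 : ∀ t ≥ (1:ℝ), φ t = t)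
    (u : ℝ → ℝ × ℝ)
    (hu : ∀ t : ℝ, HasDerivAt u (fc c ε dφ t (u t)) t)
    (hub : Bornology.IsBounded (Set.range u))
    (w : ℝ → ℝ × ℝ)
    (hw : ∀ t : ℝ, HasDerivAt w
      (dφ (-t) • Dfminus (u t) (w t) + dφ t • Dfplus ε (w t)) t)
    (hwb : Bornology.IsBounded (Set.range w)) :
    ∀ t : ℝ, w t = 0 := by
  have hdφ := eq_zero_of_hasDerivAt_of_eqOn_Iic (fun t _ => hφ t) hφ0
  have hφ' : ∀ t ≥ 0, HasDerivAt φ (dφ t) t := fun t _ => hφ t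
  have hu_fwd : ∀ t ≥ 0, HasDerivAt u (dφ t • fplus ε (u t)) t := fun t ht => by
    simpa [fc, hdφ (-t) (by linarith)] using hu t
  have hw_fwd : ∀ t ≥ 0, HasDerivAt w (dφ t • fplus ε (w t)) t := fun t ht => by
    simpa [Dfplus, fplus, hdφ (-t) (by linarith)] using hw t
  have hu_bwd : ∀ s ≥ 0, HasDerivAt (fun s => u (-s)) (-dφ s • fminus c (u (-s))) s :=
    fun s hs => by
      simpa [fc, Function.comp_def, hdφ (-s) (by linarith)]
        using (hu (-s)).scomp s (hasDerivAt_neg s)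
  have hw_bwd : ∀ s ≥ 0,
      HasDerivAt (fun s => w (-s)) (-dφ s • Dfminus (u (-s)) (w (-s))) s :=
    fun s hs => by
      simpa [Function.comp_def, hdφ (-s) (by linarith)] using (hw (-s)).scomp s (hasDerivAt_neg s)
  have hw_neg : ∀ s ≥ 0, w (-s) = 0 :=
    eq_zero_of_hasDerivAt_neg_fminus hφ' hφ1 hc hu_bwd hw_bwd
      (hub.subset (range_comp_subset_range _ u)) (hwb.subset (range_comp_subset_range _ w))
      (by simpa using snd_eq_zero_of_hasDerivAt_fplus hφ' hφ1 hu_fwd hub 0 le_rfl)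
      (by simpa using snd_eq_zero_of_hasDerivAt_fplus hφ' hφ1 hw_fwd hwb 0 le_rfl)
  intro t
  rcases le_total 0 t with ht | ht
  · refine eq_zero_of_hasDerivAt_fplus hφ' hφ1 hw_fwd hwb ?_ t ht
    simpa using congrArg Prod.fst (hw_neg 0 le_rfl)
  · simpa using hw_neg (-t) (by linarith)

/-- For `c > 0`, every bounded full solution `u` of
`ẋ = f_c(t,x)` is weakly hyperbolic: the linearization
`ẇ = φ'(-t) Df⁻_c(u(t)) w + φ'(t) Df⁺_ε w` has no bounded full solution
other than `w ≡ 0`. -/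
theorem stmt11 (c ε : ℝ) (hc : 0 < c) (hε : 0 < ε) (φ dφ : ℝ → ℝ)
    (hφ : ∀ t : ℝ, HasDerivAt φ (dφ t) t) (hdc : Continuous dφ)
    (hφ0 : ∀ t ≤ (0:ℝ), φ t = 0) (hφ1 : ∀ t ≥ (1:ℝ), φ t = t)
    (hdpos : ∀ t : ℝ, 0 ≤ dφ t)
    (u : ℝ → ℝ × ℝ)
    (hu : ∀ t : ℝ, HasDerivAt u (fc c ε dφ t (u t)) t)
    (hub : Bornology.IsBounded (Set.range u))
    (w : ℝ → ℝ × ℝ)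
    (hw : ∀ t : ℝ, HasDerivAt w
      (dφ (-t) • Dfminus (u t) (w t) + dφ t • Dfplus ε (w t)) t)
    (hwb : Bornology.IsBounded (Set.range w)) :
    ∀ t : ℝ, w t = 0 :=
  stmt11_general c ε hc φ dφ hφ hφ0 hφ1 u hu hub w hw hwb
end

section
/- Fix $c\in\mathbb{R}$ and $\varepsilon>0$. The nonautonomous equation $\dot x=g_c(t,x)$ has exactly one bounded full solution $v:\mathbb{R}\to\mathbb{R}^2$; it satisfies $v(t)=(0,0)$ for all $t\le 0$, $v(t)\to(0,0)$ as $t\to-\infty$, and $v(t)\to(0,-c)$ as $t\to+\infty$. -/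
/-- `g_c(t,x) = φ'(-t) f⁺_ε(x) + φ'(t) f⁻_c(x)`, where `dφ = φ'`. -/
def gc (c ε : ℝ) (dφ : ℝ → ℝ) (t : ℝ) (x : ℝ × ℝ) : ℝ × ℝ :=
  dφ (-t) • fplus ε x + dφ t • fminus c x

open Real Filter Set Bornology

/-! Since `φ'` vanishes on `(-∞, 0]`, the field is `φ'(-t) f⁺_ε` for `t ≤ 0` and `φ'(t) f⁻_c` for
`t ≥ 0`. Along a solution, `x₁` on `[0, ∞)`, and `x₂` and `x₁ - (ε/2) x₂` (eigencoordinates of the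
linear field `f⁺_ε`) on `(-∞, 0]`, solve scalar equations `ẏ = a(t) y` with integrating factors
`exp (± φ (± t))`. As `φ t = t` for `t ≥ 1`, these grow exponentially unless they start at `0`, so a
bounded solution has `v 0 = 0`. Then `x₁ ≡ 0`, `x₂ ≡ 0` on `(-∞, 0]`, and `x₂ + c = c exp (-φ t)`
on `[0, ∞)`. -/

theorem HasDerivAt.comp_neg {f : ℝ → ℝ} {f' x : ℝ} (hf : HasDerivAt f f' (-x)) :
    HasDerivAt (fun s => f (-s)) (-f') x :=
  (hf.comp x (hasDerivAt_neg x)).congr_deriv (mul_neg_one f')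

theorem tendsto_atTop_of_forall_ge_eq_self {f : ℝ → ℝ} {a : ℝ} (hf : ∀ t ≥ a, f t = t) :
    Tendsto f atTop atTop :=
  tendsto_id.congr' ((eventually_ge_atTop a).mono fun t ht => (hf t ht).symm)

theorem HasDerivAt.eq_zero_of_forall_le_eq_s12 {f : ℝ → ℝ} {f' b s k : ℝ} (hf : HasDerivAt f f' s)
    (hk : ∀ r ≤ b, f r = k) (hs : s ≤ b) : f' = 0 := by
  have hconst : HasDerivWithinAt f 0 (Iic s) s :=
    (hasDerivWithinAt_const s _ k).congr (fun r hr => hk r (le_trans hr hs)) (hk s hs)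
  exact (uniqueDiffWithinAt_Iic s).eq_deriv _ hf.hasDerivWithinAt hconst

theorem eq_mul_exp_sub_of_hasDerivAt {f a α : ℝ → ℝ} {s t : ℝ}
    (hf : ∀ r ∈ uIcc s t, HasDerivAt f (a r * f r) r)
    (hα : ∀ r ∈ uIcc s t, HasDerivAt α (a r) r) :
    f t = f s * exp (α t - α s) := by
  set g : ℝ → ℝ := fun r => f r * exp (-α r)
  have hg : ∀ r ∈ uIcc s t, HasDerivAt g 0 r := fun r hr =>
    ((hf r hr).mul (hα r hr).neg.exp).congr_deriv (by ring)
  have hconst : ∀ r ∈ uIcc s t, g r = g (s ⊓ t) :=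
    constant_of_has_deriv_right_zero (fun r hr => (hg r hr).continuousAt.continuousWithinAt)
      (fun r hr => (hg r (Ico_subset_Icc_self hr)).hasDerivWithinAt)
  have hgst : f t * exp (-α t) = f s * exp (-α s) :=
    (hconst t right_mem_uIcc).trans (hconst s left_mem_uIcc).symm
  calc f t = f t * exp (-α t) * exp (α t) := by rw [mul_assoc, ← exp_add]; simp
    _ = f s * exp (α t - α s) := by rw [hgst, mul_assoc, ← exp_add]; ring_nf

theorem eq_zero_of_abs_mul_exp_le {l : Filter ℝ} [l.NeBot] {α : ℝ → ℝ} (hα : Tendsto α l atTop)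
    {b M : ℝ} (hM : ∀ᶠ t in l, |b * exp (α t)| ≤ M) : b = 0 := by
  by_contra hb
  have hgrow : Tendsto (fun t => |b| * exp (α t)) l atTop :=
    (tendsto_exp_atTop.comp hα).const_mul_atTop (abs_pos.2 hb)
  obtain ⟨t, hbig, hle⟩ := ((hgrow.eventually_gt_atTop M).and hM).exists
  rw [abs_mul, abs_of_pos (exp_pos _)] at hle
  exact hle.not_gt hbig

section Components

variable {c ε : ℝ} {dφ : ℝ → ℝ} {v : ℝ → ℝ × ℝ} {t : ℝ}

theorem hasDerivAt_fst_of_deriv_neg_eq_zero (hv : HasDerivAt v (gc c ε dφ t (v t)) t)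
    (hd : dφ (-t) = 0) : HasDerivAt (fun s => (v s).1) (dφ t * (v t).1) t :=
  HasDerivAt.congr_deriv (f := fun s => (v s).1) hv.fst
    (by simp [gc, fminus, hd])

theorem hasDerivAt_snd_of_deriv_neg_eq_zero (hv : HasDerivAt v (gc c ε dφ t (v t)) t)
    (hd : dφ (-t) = 0) :
    HasDerivAt (fun s => (v s).2) (dφ t * (-(v t).2 + 3 * (v t).1 ^ 2 - c)) t :=
  HasDerivAt.congr_deriv (f := fun s => (v s).2) hv.snd
    (by simp [gc, fminus, hd])

theorem hasDerivAt_fst_of_deriv_eq_zero (hv : HasDerivAt v (gc c ε dφ t (v t)) t)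
    (hd : dφ t = 0) : HasDerivAt (fun s => (v s).1) (dφ (-t) * (-(v t).1 + ε * (v t).2)) t :=
  HasDerivAt.congr_deriv (f := fun s => (v s).1) hv.fst
    (by simp [gc, fplus, hd])

theorem hasDerivAt_snd_of_deriv_eq_zero (hv : HasDerivAt v (gc c ε dφ t (v t)) t)
    (hd : dφ t = 0) : HasDerivAt (fun s => (v s).2) (dφ (-t) * (v t).2) t :=
  HasDerivAt.congr_deriv (f := fun s => (v s).2) hv.snd
    (by simp [gc, fplus, hd])

end Components

noncomputable def boundedSolution (c : ℝ) (φ : ℝ → ℝ) (t : ℝ) : ℝ × ℝ :=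
  (0, c * exp (-φ t) - c)

section Solutions

variable {c ε : ℝ} {φ dφ : ℝ → ℝ}

theorem boundedSolution_of_nonpos (hφ0 : ∀ t ≤ 0, φ t = 0) {t : ℝ} (ht : t ≤ 0) :
    boundedSolution c φ t = (0, 0) := by
  simp [boundedSolution, hφ0 t ht]

theorem tendsto_boundedSolution_atTop (hφ1 : ∀ t ≥ 1, φ t = t) :
    Tendsto (boundedSolution c φ) atTop (nhds (0, -c)) := by
  have hexp : Tendsto (fun t => exp (-φ t)) atTop (nhds 0) :=
    tendsto_exp_atBot.comp <|
      tendsto_neg_atTop_atBot.comp (tendsto_atTop_of_forall_ge_eq_self hφ1)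
  have hlim := (tendsto_const_nhds (x := (0 : ℝ))).prodMk_nhds ((hexp.const_mul c).sub_const c)
  rwa [mul_zero, zero_sub] at hlim

theorem isBounded_range_boundedSolution (hφ : Continuous φ) (hφ0 : ∀ t ≤ 0, φ t = 0)
    (hφ1 : ∀ t ≥ 1, φ t = t) : IsBounded (range (boundedSolution c φ)) := by
  have hcocompact : ∀ᶠ t in cocompact ℝ, φ 0 ≤ φ t := by
    rw [cocompact_eq_atBot_atTop, eventually_sup, hφ0 0 le_rfl]
    exact ⟨(eventually_le_atBot 0).mono fun t ht => (hφ0 t ht).ge,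
      (eventually_ge_atTop 1).mono fun t ht => by linarith [hφ1 t ht]⟩
  obtain ⟨t₀, ht₀⟩ := hφ.exists_forall_le' 0 hcocompact
  refine isBounded_iff_forall_norm_le.2 ⟨|c| * exp (-φ t₀) + |c|, ?_⟩
  rintro _ ⟨t, rfl⟩
  have hexp : exp (-φ t) ≤ exp (-φ t₀) := exp_le_exp.2 (neg_le_neg (ht₀ t))
  have hnorm : |c * exp (-φ t) - c| ≤ |c| * exp (-φ t₀) + |c| := calc
    |c * exp (-φ t) - c| ≤ |c| * exp (-φ t) + |c| := by
      simpa [abs_mul, abs_of_pos (exp_pos _)] using abs_sub (c * exp (-φ t)) c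
    _ ≤ |c| * exp (-φ t₀) + |c| := by gcongr
  simpa [boundedSolution, Prod.norm_def] using hnorm

theorem hasDerivAt_boundedSolution (hφ : ∀ t, HasDerivAt φ (dφ t) t) (hφ0 : ∀ t ≤ 0, φ t = 0)
    (t : ℝ) : HasDerivAt (boundedSolution c φ) (gc c ε dφ t (boundedSolution c φ t)) t := by
  have hderiv : HasDerivAt (boundedSolution c φ) (0, -(c * exp (-φ t) * dφ t)) t :=
    (hasDerivAt_const t 0).prodMk ((((hφ t).neg.exp).const_mul c).sub_const c |>.congr_deriv
      (by simp only [Pi.neg_apply]; ring))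
  convert hderiv using 1
  rcases le_total t 0 with ht | ht
  · have hd : dφ t = 0 := (hφ t).eq_zero_of_forall_le_eq_s12 hφ0 ht
    simp [gc, fplus, fminus, boundedSolution, hφ0 t ht, hd]
  · have hd : dφ (-t) = 0 := (hφ (-t)).eq_zero_of_forall_le_eq_s12 hφ0 (by linarith)
    simp only [gc, fplus, fminus, boundedSolution, hd, zero_smul, zero_add, Prod.smul_mk,
      smul_eq_mul, Prod.mk.injEq]
    constructor <;> ring

end Solutions

section Uniqueness

variable {c ε : ℝ} {φ dφ : ℝ → ℝ} {v : ℝ → ℝ × ℝ} {t : ℝ}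

theorem fst_eq_mul_exp_of_nonneg (hφ : ∀ t, HasDerivAt φ (dφ t) t) (hφ0 : ∀ t ≤ 0, φ t = 0)
    (hv : ∀ t, HasDerivAt v (gc c ε dφ t (v t)) t) (ht : 0 ≤ t) :
    (v t).1 = (v 0).1 * exp (φ t) := by
  have h := eq_mul_exp_sub_of_hasDerivAt (f := fun s => (v s).1) (s := 0) (t := t)
    (fun r hr => hasDerivAt_fst_of_deriv_neg_eq_zero (hv r)
      ((hφ (-r)).eq_zero_of_forall_le_eq_s12 hφ0 (neg_nonpos.2 (uIcc_of_le ht ▸ hr).1)))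
    (fun r _ => hφ r)
  simpa [hφ0 0 le_rfl] using h

theorem snd_eq_mul_exp_of_nonpos (hφ : ∀ t, HasDerivAt φ (dφ t) t) (hφ0 : ∀ t ≤ 0, φ t = 0)
    (hv : ∀ t, HasDerivAt v (gc c ε dφ t (v t)) t) (ht : t ≤ 0) :
    (v t).2 = (v 0).2 * exp (-φ (-t)) := by
  have h := eq_mul_exp_sub_of_hasDerivAt (f := fun s => (v s).2) (α := fun s => -φ (-s))
    (s := 0) (t := t)
    (fun r hr => hasDerivAt_snd_of_deriv_eq_zero (hv r)
      ((hφ r).eq_zero_of_forall_le_eq_s12 hφ0 (uIcc_of_ge ht ▸ hr).2))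
    (fun r _ => (hφ (-r)).comp_neg.neg.congr_deriv (neg_neg _))
  simpa [hφ0 0 le_rfl] using h

theorem fst_sub_snd_eq_mul_exp_of_nonpos (hφ : ∀ t, HasDerivAt φ (dφ t) t)
    (hφ0 : ∀ t ≤ 0, φ t = 0) (hv : ∀ t, HasDerivAt v (gc c ε dφ t (v t)) t) (ht : t ≤ 0) :
    (v t).1 - ε / 2 * (v t).2 = ((v 0).1 - ε / 2 * (v 0).2) * exp (φ (-t)) := by
  have h := eq_mul_exp_sub_of_hasDerivAt (f := fun s => (v s).1 - ε / 2 * (v s).2)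
    (α := fun s => φ (-s)) (s := 0) (t := t)
    (fun r hr => by
      have hd : dφ r = 0 := (hφ r).eq_zero_of_forall_le_eq_s12 hφ0 (uIcc_of_ge ht ▸ hr).2
      exact ((hasDerivAt_fst_of_deriv_eq_zero (hv r) hd).sub
        ((hasDerivAt_snd_of_deriv_eq_zero (hv r) hd).const_mul (ε / 2))).congr_deriv (by ring))
    (fun r _ => (hφ (-r)).comp_neg)
  simpa [hφ0 0 le_rfl] using h

theorem snd_add_eq_mul_exp_of_nonneg (hφ : ∀ t, HasDerivAt φ (dφ t) t) (hφ0 : ∀ t ≤ 0, φ t = 0)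
    (hv : ∀ t, HasDerivAt v (gc c ε dφ t (v t)) t) (hv₁ : ∀ t ≥ 0, (v t).1 = 0) (ht : 0 ≤ t) :
    (v t).2 + c = ((v 0).2 + c) * exp (-φ t) := by
  have h := eq_mul_exp_sub_of_hasDerivAt (f := fun s => (v s).2 + c) (α := fun s => -φ s)
    (s := 0) (t := t)
    (fun r hr => by
      have hr : 0 ≤ r := (uIcc_of_le ht ▸ hr).1
      have hd : dφ (-r) = 0 := (hφ (-r)).eq_zero_of_forall_le_eq_s12 hφ0 (neg_nonpos.2 hr)
      exact ((hasDerivAt_snd_of_deriv_neg_eq_zero (hv r) hd).add_const c).congr_deriv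
        (by rw [hv₁ r hr]; ring))
    (fun r _ => (hφ r).neg)
  simpa [hφ0 0 le_rfl] using h

theorem apply_zero_eq_zero_of_isBounded (hε : ε ≠ 0) (hφ : ∀ t, HasDerivAt φ (dφ t) t)
    (hφ0 : ∀ t ≤ 0, φ t = 0) (hφ1 : ∀ t ≥ 1, φ t = t)
    (hv : ∀ t, HasDerivAt v (gc c ε dφ t (v t)) t) (hb : IsBounded (range v)) : v 0 = 0 := by
  obtain ⟨M, hM⟩ := isBounded_iff_forall_norm_le.1 hb
  have hM₁ (t : ℝ) : |(v t).1| ≤ M := (norm_fst_le (v t)).trans (hM _ ⟨t, rfl⟩)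
  have hM₂ (t : ℝ) : |(v t).2| ≤ M := (norm_snd_le (v t)).trans (hM _ ⟨t, rfl⟩)
  have hφ_atTop : Tendsto φ atTop atTop := tendsto_atTop_of_forall_ge_eq_self hφ1
  have hv₁ : (v 0).1 = 0 := eq_zero_of_abs_mul_exp_le hφ_atTop <| by
    filter_upwards [eventually_ge_atTop 0] with t ht
    rw [← fst_eq_mul_exp_of_nonneg hφ hφ0 hv ht]
    exact hM₁ t
  have hv₂ : (v 0).1 - ε / 2 * (v 0).2 = 0 :=
    eq_zero_of_abs_mul_exp_le (α := fun t => φ (-t)) (M := M + |ε / 2| * M)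
      (hφ_atTop.comp tendsto_neg_atBot_atTop) <| by
    filter_upwards [eventually_le_atBot 0] with t ht
    rw [← fst_sub_snd_eq_mul_exp_of_nonpos hφ hφ0 hv ht]
    calc |(v t).1 - ε / 2 * (v t).2| ≤ |(v t).1| + |ε / 2| * |(v t).2| := by
          simpa [abs_mul] using abs_sub ((v t).1) (ε / 2 * (v t).2)
      _ ≤ M + |ε / 2| * M := add_le_add (hM₁ t) (mul_le_mul_of_nonneg_left (hM₂ t) (abs_nonneg _))
  ext
  · exact hv₁
  · simpa [hv₁, hε] using hv₂

theorem eq_boundedSolution_of_isBounded (hε : ε ≠ 0) (hφ : ∀ t, HasDerivAt φ (dφ t) t)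
    (hφ0 : ∀ t ≤ 0, φ t = 0) (hφ1 : ∀ t ≥ 1, φ t = t)
    (hv : ∀ t, HasDerivAt v (gc c ε dφ t (v t)) t) (hb : IsBounded (range v)) :
    v = boundedSolution c φ := by
  have hv₀ : v 0 = 0 := apply_zero_eq_zero_of_isBounded hε hφ hφ0 hφ1 hv hb
  have hv₁ (t : ℝ) : (v t).1 = 0 := by
    rcases le_total 0 t with ht | ht
    · simp [fst_eq_mul_exp_of_nonneg hφ hφ0 hv ht, hv₀]
    · simpa [snd_eq_mul_exp_of_nonpos hφ hφ0 hv ht, hv₀] using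
        fst_sub_snd_eq_mul_exp_of_nonpos hφ hφ0 hv ht
  funext t
  ext
  · exact hv₁ t
  · rcases le_total 0 t with ht | ht
    · have h := snd_add_eq_mul_exp_of_nonneg hφ hφ0 hv (fun s _ => hv₁ s) ht
      simp only [hv₀, Prod.snd_zero, zero_add] at h
      simp only [boundedSolution]
      linarith
    · simp [boundedSolution, snd_eq_mul_exp_of_nonpos hφ hφ0 hv ht, hv₀, hφ0 t ht]

end Uniqueness

theorem stmt12_general (c ε : ℝ) (hε : 0 < ε) (φ dφ : ℝ → ℝ)
    (hφ : ∀ t : ℝ, HasDerivAt φ (dφ t) t)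
    (hφ0 : ∀ t ≤ (0:ℝ), φ t = 0) (hφ1 : ∀ t ≥ (1:ℝ), φ t = t) :
    ∃ v : ℝ → ℝ × ℝ,
      ((∀ t : ℝ, HasDerivAt v (gc c ε dφ t (v t)) t) ∧
        Bornology.IsBounded (Set.range v)) ∧
      (∀ v' : ℝ → ℝ × ℝ,
        ((∀ t : ℝ, HasDerivAt v' (gc c ε dφ t (v' t)) t) ∧
          Bornology.IsBounded (Set.range v')) → v' = v) ∧
      (∀ t ≤ (0:ℝ), v t = ((0:ℝ), (0:ℝ))) ∧
      Filter.Tendsto v Filter.atBot (nhds ((0:ℝ), (0:ℝ))) ∧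
      Filter.Tendsto v Filter.atTop (nhds ((0:ℝ), -c)) := by
  have hφc : Continuous φ := continuous_iff_continuousAt.2 fun t => (hφ t).continuousAt
  refine ⟨boundedSolution c φ,
    ⟨hasDerivAt_boundedSolution hφ hφ0, isBounded_range_boundedSolution hφc hφ0 hφ1⟩,
    fun v ⟨hv, hb⟩ => eq_boundedSolution_of_isBounded hε.ne' hφ hφ0 hφ1 hv hb,
    fun t ht => boundedSolution_of_nonpos hφ0 ht, ?_, tendsto_boundedSolution_atTop hφ1⟩
  exact tendsto_const_nhds.congr' <|
    (eventually_le_atBot 0).mono fun t ht => (boundedSolution_of_nonpos hφ0 ht).symm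

/-- `ẋ = g_c(t,x)` has exactly one bounded full solution `v`;
it satisfies `v(t) = (0,0)` for `t ≤ 0`, `v(t) → (0,0)` as `t → -∞` and
`v(t) → (0,-c)` as `t → +∞`. -/
theorem stmt12 (c ε : ℝ) (hε : 0 < ε) (φ dφ : ℝ → ℝ)
    (hφ : ∀ t : ℝ, HasDerivAt φ (dφ t) t) (hdc : Continuous dφ)
    (hφ0 : ∀ t ≤ (0:ℝ), φ t = 0) (hφ1 : ∀ t ≥ (1:ℝ), φ t = t)
    (hdpos : ∀ t : ℝ, 0 ≤ dφ t) :
    ∃ v : ℝ → ℝ × ℝ,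
      ((∀ t : ℝ, HasDerivAt v (gc c ε dφ t (v t)) t) ∧
        Bornology.IsBounded (Set.range v)) ∧
      (∀ v' : ℝ → ℝ × ℝ,
        ((∀ t : ℝ, HasDerivAt v' (gc c ε dφ t (v' t)) t) ∧
          Bornology.IsBounded (Set.range v')) → v' = v) ∧
      (∀ t ≤ (0:ℝ), v t = ((0:ℝ), (0:ℝ))) ∧
      Filter.Tendsto v Filter.atBot (nhds ((0:ℝ), (0:ℝ))) ∧
      Filter.Tendsto v Filter.atTop (nhds ((0:ℝ), -c)) :=
  stmt12_general c ε hε φ dφ hφ hφ0 hφ1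
end
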